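/- arXiv:2404.19603 — 9 statements merged into one kernel-verified Lean document; each statement's English description precedes it below -/
import Mathlib

section
/- Let A be a commutative ring, p a prime number and d ∈ A. Assume that p is a nonzerodivisor on A, that d is a nonzerodivisor on A, and that the quotient ring A/dA is p-torsion-free. Then the commutative square of localization maps A → A[1/p], A → A[1/d], A[1/p] → A[1/(p·d)], A[1/d] → A[1/(p·d)] is Cartesian: the induced ring homomorphism A → A[1/p] ×_{A[1/(p·d)]} A[1/d] is bijective. Equivalently, A[1/p] ∩ A[1/d] = A inside A[1/(p·d)]. -/
/-!
Write `x = a / p^n ∈ A[1/p]` and `y = b / d^m ∈ A[1/d]`. If they agree in `A[1/(p·d)]`, then,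
since `p·d` is a nonzerodivisor, `a · d^m = b · p^n` already in `A`. As `A/(d^m)` is still
`p`-torsion-free (induction on `m`, cancelling `d`), `d^m ∣ b`, say `b = d^m · c`; cancelling
`d^m` gives `a = p^n · c`, so `x` and `y` are both the image of `c`.
-/

open nonZeroDivisors

section Divisibility

variable {A : Type*} [CommRing A] {r s : A}

theorem pow_dvd_of_pow_dvd_mul (hs : s ∈ A⁰) (htf : ∀ x, s ∣ r * x → s ∣ x) :
    ∀ (m : ℕ) {x : A}, s ^ m ∣ r * x → s ^ m ∣ x
  | 0, _, _ => by simp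
  | m + 1, x, h => by
    obtain ⟨x', rfl⟩ := htf x (dvd_trans (dvd_pow_self s m.succ_ne_zero) h)
    obtain ⟨k, hk⟩ := h
    have hk' : r * x' = s ^ m * k :=
      (mul_cancel_left_mem_nonZeroDivisors hs).mp (by linear_combination hk)
    rw [pow_succ']
    exact mul_dvd_mul_left s (pow_dvd_of_pow_dvd_mul hs htf m ⟨k, hk'⟩)

theorem pow_dvd_of_pow_dvd_pow_mul (hs : s ∈ A⁰) (htf : ∀ x, s ∣ r * x → s ∣ x)
    (m : ℕ) : ∀ (n : ℕ) {x : A}, s ^ m ∣ r ^ n * x → s ^ m ∣ x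
  | 0, _, h => by simpa using h
  | n + 1, x, h => pow_dvd_of_pow_dvd_pow_mul hs htf m n <|
      pow_dvd_of_pow_dvd_mul hs htf m (by rwa [← mul_assoc, ← pow_succ'])

theorem exists_eq_pow_mul_of_mul_pow_eq (hs : s ∈ A⁰) (htf : ∀ x, s ∣ r * x → s ∣ x)
    {a b : A} {m n : ℕ} (h : a * s ^ m = b * r ^ n) :
    ∃ c, a = r ^ n * c ∧ b = s ^ m * c := by
  obtain ⟨c, rfl⟩ : s ^ m ∣ b :=
    pow_dvd_of_pow_dvd_pow_mul hs htf m n ⟨a, by linear_combination -h⟩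
  refine ⟨c, (mul_cancel_left_mem_nonZeroDivisors (pow_mem hs m)).mp ?_, rfl⟩
  linear_combination h

end Divisibility

namespace IsLocalization.Away

variable {A Br Bs Brs : Type*} [CommRing A] [CommRing Br] [CommRing Bs] [CommRing Brs]
  [Algebra A Br] [Algebra A Bs] [Algebra A Brs] {r s : A}

theorem algebraMap_injective_of_mem_nonZeroDivisors [IsLocalization.Away r Br] (hr : r ∈ A⁰) :
    Function.Injective (algebraMap A Br) :=
  IsLocalization.injective Br (Submonoid.powers_le.mpr hr)

theorem exists_algebraMap_eq_of_map_eq [IsLocalization.Away r Br] [IsLocalization.Away s Bs]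
    [IsLocalization.Away (r * s) Brs] (hr : r ∈ A⁰) (hs : s ∈ A⁰)
    (htf : ∀ x, s ∣ r * x → s ∣ x) {g₁ : Br →+* Brs} {g₂ : Bs →+* Brs}
    (hg₁ : g₁.comp (algebraMap A Br) = algebraMap A Brs)
    (hg₂ : g₂.comp (algebraMap A Bs) = algebraMap A Brs) {x : Br} {y : Bs}
    (hxy : g₁ x = g₂ y) : ∃ c, algebraMap A Br c = x ∧ algebraMap A Bs c = y := by
  obtain ⟨n, a, hx⟩ := surj r x
  obtain ⟨m, b, hy⟩ := surj s y
  have hx' : g₁ x * algebraMap A Brs r ^ n = algebraMap A Brs a := by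
    simpa [← hg₁] using congrArg g₁ hx
  have hy' : g₂ y * algebraMap A Brs s ^ m = algebraMap A Brs b := by
    simpa [← hg₂] using congrArg g₂ hy
  have hab : a * s ^ m = b * r ^ n := by
    apply algebraMap_injective_of_mem_nonZeroDivisors (Br := Brs) (mul_mem hr hs)
    simp only [map_mul, map_pow, ← hx', ← hy', hxy]
    ring
  obtain ⟨c, rfl, rfl⟩ := exists_eq_pow_mul_of_mul_pow_eq hs htf hab
  refine ⟨c, ?_, ?_⟩
  · refine (algebraMap_pow_isUnit r n).mul_left_cancel ?_
    rw [mul_comm _ x, hx, map_mul, map_pow]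
  · refine (algebraMap_pow_isUnit s m).mul_left_cancel ?_
    rw [mul_comm _ y, hy, map_mul, map_pow]

end IsLocalization.Away

open IsLocalization.Away in
theorem transversal_prism_localization_intersection
    {A : Type*} [CommRing A] (p : ℕ) (d : A)
    (hpA : (p : A) ∈ nonZeroDivisors A) (hdA : d ∈ nonZeroDivisors A)
    (htf : ∀ x : A, (p : A) * x ∈ Ideal.span {d} → x ∈ Ideal.span {d})
    (g₁ : Localization.Away (p : A) →+* Localization.Away ((p : A) * d))
    (g₂ : Localization.Away d →+* Localization.Away ((p : A) * d))
    (hg₁ : g₁.comp (algebraMap A (Localization.Away (p : A))) =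
      algebraMap A (Localization.Away ((p : A) * d)))
    (hg₂ : g₂.comp (algebraMap A (Localization.Away d)) =
      algebraMap A (Localization.Away ((p : A) * d))) :
    Function.Bijective (fun a : A =>
      (⟨(algebraMap A (Localization.Away (p : A)) a,
         algebraMap A (Localization.Away d) a),
        by exact (RingHom.congr_fun hg₁ a).trans (RingHom.congr_fun hg₂ a).symm⟩ :
        {xy : Localization.Away (p : A) × Localization.Away d //
          g₁ xy.1 = g₂ xy.2})) := by
  refine ⟨fun a b hab ↦ algebraMap_injective_of_mem_nonZeroDivisors hpA
    (congrArg (·.1.1) hab), ?_⟩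
  rintro ⟨⟨x, y⟩, hxy⟩
  have htf' : ∀ x, d ∣ (p : A) * x → d ∣ x := by
    simpa only [Ideal.mem_span_singleton] using htf
  obtain ⟨c, hcx, hcy⟩ := exists_algebraMap_eq_of_map_eq hpA hdA htf' hg₁ hg₂ hxy
  exact ⟨c, Subtype.ext (Prod.ext hcx hcy)⟩
end

section
/- Let A be a commutative ring, p a prime number and d ∈ A. Assume that p and d are nonzerodivisors on A, that A/dA is p-torsion-free, and that A is p-adically separated, i.e. ⋂_{n≥0} p^n A = 0 (this holds in particular when A is classically p-adically complete). Then the localization A[1/d] is p-adically separated: ⋂_{n≥0} p^n · A[1/d] = 0. -/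
/-!
If `d` is a nonzerodivisor and `p` is regular on `A/dA`, then `d` is regular on every `A/pⁿA`,
hence so is every power of `d`. Therefore the ideals `pⁿA` are saturated with respect to
`A → A[1/d]`: the preimage of `pⁿ·A[1/d]` is `pⁿA`. Taking preimages commutes with
intersections, so the preimage of `⋂ₙ pⁿ·A[1/d]` is `⋂ₙ pⁿA = 0`, and an ideal of a localization
is generated by its preimage.
-/

open Ideal

theorem pow_dvd_of_pow_dvd_mul_left {R : Type*} [CommRing R] {x d : R}
    (hd : d ∈ nonZeroDivisors R) (hx : ∀ a, d ∣ x * a → d ∣ a) :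
    ∀ (n : ℕ) (a : R), x ^ n ∣ d * a → x ^ n ∣ a
  | 0, _, _ => by simp
  | n + 1, a, ⟨b, hb⟩ => by
    obtain ⟨c, hc⟩ : d ∣ x ^ n * b := hx _ ⟨a, by linear_combination -hb⟩
    have ha : a = x * c := (mul_cancel_left_mem_nonZeroDivisors hd).mp <| by
      linear_combination hb + x * hc
    obtain ⟨e, rfl⟩ := pow_dvd_of_pow_dvd_mul_left hd hx n c ⟨b, hc.symm⟩
    exact ⟨e, by rw [ha, pow_succ']; ring⟩

theorem dvd_of_dvd_mul_of_mem_powers {R : Type*} [CommMonoid R] {y d : R}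
    (hd : ∀ a, y ∣ d * a → y ∣ a) {s : R} (hs : s ∈ Submonoid.powers d) {a : R}
    (h : y ∣ s * a) : y ∣ a := by
  obtain ⟨m, rfl⟩ := hs
  induction m generalizing a with
  | zero => simpa using h
  | succ m ih => exact ih (hd _ (by rwa [← mul_assoc, ← pow_succ']))

theorem IsLocalization.under_map_eq_of_forall_mul_mem {R : Type*} [CommRing R]
    (M : Submonoid R) (S : Type*) [CommRing S] [Algebra R S] [IsLocalization M S] {I : Ideal R}
    (hI : ∀ m ∈ M, ∀ a, m * a ∈ I → a ∈ I) :
    (I.map (algebraMap R S)).under R = I := by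
  refine le_antisymm (fun a ha ↦ ?_) le_comap_map
  obtain ⟨m, hm, h⟩ := (algebraMap_mem_map_algebraMap_iff M S I a).mp ha
  exact hI m hm a h

theorem localization_away_padically_separated_general
    {A : Type*} [CommRing A] (p : ℕ) (d : A)
    (hdA : d ∈ nonZeroDivisors A)
    (htf : ∀ x : A, (p : A) * x ∈ Ideal.span {d} → x ∈ Ideal.span {d})
    (hsep : (⨅ n : ℕ, Ideal.span {(p : A) ^ n}) = ⊥) :
    (⨅ n : ℕ, Ideal.span {(p : Localization.Away d) ^ n}) = ⊥ := by
  have hreg (n : ℕ) : ∀ s ∈ Submonoid.powers d, ∀ a, s * a ∈ span {(p : A) ^ n} →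
      a ∈ span {(p : A) ^ n} := by
    simp only [mem_span_singleton] at htf ⊢
    exact fun s hs a ↦ dvd_of_dvd_mul_of_mem_powers (pow_dvd_of_pow_dvd_mul_left hdA htf n) hs
  have hunder (n : ℕ) :
      (span {(p : Localization.Away d) ^ n}).comap (algebraMap A _) = span {(p : A) ^ n} := by
    rw [← IsLocalization.under_map_eq_of_forall_mul_mem (Submonoid.powers d)
      (Localization.Away d) (hreg n), map_span, Set.image_singleton, map_pow, map_natCast]
  rw [← IsLocalization.map_under (Submonoid.powers d) (Localization.Away d) (⨅ _, _), under,
    comap_iInf]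
  simp only [hunder, hsep, Ideal.map_bot]

theorem localization_away_padically_separated
    {A : Type*} [CommRing A] (p : ℕ) (hp : p.Prime) (d : A)
    (hpA : (p : A) ∈ nonZeroDivisors A) (hdA : d ∈ nonZeroDivisors A)
    (htf : ∀ x : A, (p : A) * x ∈ Ideal.span {d} → x ∈ Ideal.span {d})
    (hsep : (⨅ n : ℕ, Ideal.span {(p : A) ^ n}) = ⊥) :
    (⨅ n : ℕ, Ideal.span {(p : Localization.Away d) ^ n}) = ⊥ :=
  localization_away_padically_separated_general p d hdA htf hsep
end

section
/- Let A be a commutative ring, p a prime number and d ∈ A. Assume that p and d are nonzerodivisors on A, that A/dA is p-torsion-free, and that A is classically p-adically complete. Let C := lim_n A[1/d]/p^n A[1/d] be the p-adic completion of A[1/d]. Then the natural square formed by A → A[1/p], A → A[1/d] → C, and the induced maps A[1/p] → C[1/p] and C → C[1/p] is Cartesian: the induced ring homomorphism A → A[1/p] ×_{C[1/p]} C is bijective. Equivalently, A[1/p] ∩ (A[1/d])^∧_p = A. -/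
/-!
Write `x ∈ A[1/p]` as `a / pⁿ`. If `x` and `c ∈ C` agree in `C[1/p]`, then `a = pⁿ c` in `C`,
because `p` is a nonzerodivisor on `C` (it is one on `A[1/d]`, and `pⁿ⁺¹`-divisibility of `p y`
gives `pⁿ`-divisibility of `y`). Reducing modulo `pⁿ` shows that `a` is divisible by `pⁿ` in
`A[1/d]`, i.e. `dᵏ a ∈ pⁿ A` for some `k`. Since `d` is a nonzerodivisor and `p` is one modulo
`d`, also `d` is one modulo `pⁿ`, so `a = pⁿ b` with `b ∈ A`, and `b` maps to `(x, c)`.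
-/

/-- The p-adic completion `C = (A[1/d])^∧_p = lim_n A[1/d]/pⁿA[1/d]` of the
localization `A[1/d]`. -/
noncomputable abbrev PAdicCompletionOfAway (A : Type*) [CommRing A] (p : ℕ) (d : A) : Type _ :=
  AdicCompletion (Ideal.span {(p : Localization.Away d)}) (Localization.Away d)

namespace Ideal

variable {A : Type*} [CommRing A]

theorem mem_of_pow_mul_mem {I : Ideal A} {x : A} (h : ∀ y, x * y ∈ I → y ∈ I) :
    ∀ (n : ℕ) (y : A), x ^ n * y ∈ I → y ∈ I
  | 0, y, hy => by simpa using hy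
  | n + 1, y, hy => mem_of_pow_mul_mem h n y (h _ (by rwa [pow_succ', mul_assoc] at hy))

theorem mem_span_singleton_of_mul_mem_of_transversal {x d : A} (hd : d ∈ nonZeroDivisors A)
    (h : ∀ y, x * y ∈ span {d} → y ∈ span {d}) {a : A} (ha : d * a ∈ span {x}) :
    a ∈ span {x} := by
  obtain ⟨b, hb⟩ := mem_span_singleton'.1 ha
  obtain ⟨c, rfl⟩ :=
    mem_span_singleton'.1 (h b (mem_span_singleton'.2 ⟨a, by linear_combination -hb⟩))
  refine mem_span_singleton'.2 ⟨c, (mul_cancel_left_mem_nonZeroDivisors hd).1 ?_⟩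
  rw [← hb]; ring

theorem mem_span_singleton_pow_of_mul_mem {r y : A} (hr : r ∈ nonZeroDivisors A) {n : ℕ}
    (hy : r * y ∈ span {r} ^ (n + 1)) : y ∈ span {r} ^ n := by
  rw [span_singleton_pow, mem_span_singleton'] at hy ⊢
  obtain ⟨z, hz⟩ := hy
  exact ⟨z, (mul_cancel_left_mem_nonZeroDivisors hr).1 (by rw [← hz]; ring)⟩

end Ideal

theorem IsLocalization.Away.comap_map_span_singleton {A : Type*} [CommRing A] {d : A}
    (S : Type*) [CommRing S] [Algebra A S] [IsLocalization.Away d S]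
    (hd : d ∈ nonZeroDivisors A) {x : A}
    (h : ∀ y, x * y ∈ Ideal.span {d} → y ∈ Ideal.span {d}) :
    ((Ideal.span {x}).map (algebraMap A S)).comap (algebraMap A S) = Ideal.span {x} := by
  refine le_antisymm (fun a ha => ?_) Ideal.le_comap_map
  obtain ⟨_, ⟨k, rfl⟩, hk⟩ :=
    (IsLocalization.algebraMap_mem_map_algebraMap_iff (Submonoid.powers d) S _ a).1 ha
  exact Ideal.mem_of_pow_mul_mem
    (fun _ => Ideal.mem_span_singleton_of_mul_mem_of_transversal hd h) k a hk

namespace AdicCompletion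

variable {R : Type*} [CommRing R]

theorem comap_map_algebraMap_pow (I : Ideal R) (n : ℕ) :
    ((I ^ n).map (algebraMap R (AdicCompletion I R))).comap (algebraMap R _) = I ^ n := by
  refine le_antisymm (fun a ha => ?_) Ideal.le_comap_map
  have hker : (I ^ n).map (algebraMap R (AdicCompletion I R)) ≤ RingHom.ker (evalₐ I n) :=
    Ideal.map_le_iff_le_comap.2 fun x hx => by
      simp [algebraMap_apply, Ideal.Quotient.eq_zero_iff_mem.2 hx]
  simpa [algebraMap_apply, Ideal.Quotient.eq_zero_iff_mem] using hker ha

theorem algebraMap_mem_nonZeroDivisors {r : R} (hr : r ∈ nonZeroDivisors R) :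
    algebraMap R (AdicCompletion (Ideal.span {r}) R) r ∈
      nonZeroDivisors (AdicCompletion (Ideal.span {r}) R) := by
  refine mem_nonZeroDivisors_iff_right.2 fun c hc => ext_evalₐ fun n => ?_
  obtain ⟨s, rfl⟩ : ∃ s, mkₐ (Ideal.span {r}) s = c := mk_surjective (Ideal.span {r}) R c
  have hs := congrArg (evalₐ (Ideal.span {r}) (n + 1)) hc
  rw [map_mul, _root_.map_zero, evalₐ_mkₐ, algebraMap_apply, evalₐ_of, ← map_mul, mul_comm,
    Ideal.Quotient.eq_zero_iff_mem] at hs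
  rw [_root_.map_zero, evalₐ_mkₐ, ← Ideal.mk_eq_mk _ n.le_succ,
    Ideal.Quotient.eq_zero_iff_mem]
  exact Ideal.mem_span_singleton_pow_of_mul_mem hr hs

end AdicCompletion

theorem IsLocalization.Away.exists_lift_of_map_eq_algebraMap {A C : Type*} [CommRing A]
    [CommRing C] {p : A} {q : C} (S T : Type*) [CommRing S] [Algebra A S]
    [IsLocalization.Away p S] [CommRing T] [Algebra C T] [IsLocalization.Away q T]
    (f : A →+* C) (hfp : f p = q) (hq : q ∈ nonZeroDivisors C)
    (hcomap : ∀ n : ℕ, ((Ideal.span {p ^ n}).map f).comap f ≤ Ideal.span {p ^ n})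
    (g : S →+* T) (hg : g.comp (algebraMap A S) = (algebraMap C T).comp f)
    {x : S} {c : C} (hxc : g x = algebraMap C T c) :
    ∃ b : A, algebraMap A S b = x ∧ f b = c := by
  obtain ⟨⟨a, _, n, rfl⟩, rfl⟩ := IsLocalization.mk'_surjective (Submonoid.powers p) x
  have hgA (y : A) : g (algebraMap A S y) = algebraMap C T (f y) := RingHom.congr_fun hg y
  have hfa : f a = q ^ n * c := by
    refine IsLocalization.injective T (Submonoid.powers_le.2 hq) ?_
    rw [← hgA, ← IsLocalization.mk'_spec (M := Submonoid.powers p) S a, map_mul, hxc, hgA,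
      map_pow, hfp, ← map_mul, mul_comm]
  obtain ⟨b, rfl⟩ : ∃ b, b * p ^ n = a := by
    refine Ideal.mem_span_singleton'.1 (hcomap n (Ideal.mem_comap.2 ?_))
    rw [hfa, ← hfp, ← map_pow]
    exact Ideal.mul_mem_right c _ (Ideal.mem_map_of_mem f (Ideal.mem_span_singleton_self _))
  refine ⟨b, (IsLocalization.mk'_mul_cancel_right b
    (⟨p ^ n, n, rfl⟩ : Submonoid.powers p)).symm, ?_⟩
  rw [map_mul, map_pow, hfp, mul_comm] at hfa
  exact (mul_cancel_left_mem_nonZeroDivisors (pow_mem hq n)).1 hfa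

theorem transversal_prism_intersection_with_completed_localization
    {A : Type*} [CommRing A] (p : ℕ) (d : A)
    (hpA : (p : A) ∈ nonZeroDivisors A) (hdA : d ∈ nonZeroDivisors A)
    (htf : ∀ x : A, (p : A) * x ∈ Ideal.span {d} → x ∈ Ideal.span {d})
    (g₁ : Localization.Away (p : A) →+*
      Localization.Away (p : PAdicCompletionOfAway A p d))
    (hg₁ : g₁.comp (algebraMap A (Localization.Away (p : A))) =
      ((algebraMap (PAdicCompletionOfAway A p d)
          (Localization.Away (p : PAdicCompletionOfAway A p d))).comp
        ((algebraMap (Localization.Away d) (PAdicCompletionOfAway A p d)).comp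
          (algebraMap A (Localization.Away d))))) :
    Function.Bijective (fun a : A =>
      (⟨(algebraMap A (Localization.Away (p : A)) a,
          algebraMap (Localization.Away d) (PAdicCompletionOfAway A p d)
            (algebraMap A (Localization.Away d) a)),
        by exact RingHom.congr_fun hg₁ a⟩ :
        {xc : Localization.Away (p : A) × PAdicCompletionOfAway A p d //
          g₁ xc.1 = algebraMap (PAdicCompletionOfAway A p d)
            (Localization.Away (p : PAdicCompletionOfAway A p d)) xc.2})) := by
  let R := Localization.Away d
  let C := PAdicCompletionOfAway A p d
  let f : A →+* C := (algebraMap R C).comp (algebraMap A R)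
  have hpR : (p : R) ∈ nonZeroDivisors R := by
    simpa using IsLocalization.nonZeroDivisors_le_comap (Submonoid.powers d) R hpA
  have hpC : (p : C) ∈ nonZeroDivisors C := by
    simpa using AdicCompletion.algebraMap_mem_nonZeroDivisors hpR
  have hcomap (n : ℕ) :
      ((Ideal.span {(p : A) ^ n}).map f).comap f ≤ Ideal.span {(p : A) ^ n} := by
    have hmap : (Ideal.span {(p : A) ^ n}).map (algebraMap A R) = Ideal.span {(p : R)} ^ n := by
      rw [Ideal.map_span, Set.image_singleton, map_pow, map_natCast, Ideal.span_singleton_pow]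
    rw [← Ideal.map_map, ← Ideal.comap_comap, hmap, AdicCompletion.comap_map_algebraMap_pow,
      ← hmap, IsLocalization.Away.comap_map_span_singleton R hdA (Ideal.mem_of_pow_mul_mem htf n)]
  refine ⟨fun a b h => IsLocalization.injective _ (Submonoid.powers_le.2 hpA) congr($h.1.1), ?_⟩
  rintro ⟨⟨x, c⟩, hxc⟩
  obtain ⟨b, hbx, hbc⟩ := IsLocalization.Away.exists_lift_of_map_eq_algebraMap
    (Localization.Away (p : A)) (Localization.Away (p : C)) f (map_natCast f p) hpC hcomap
    g₁ hg₁ hxc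
  exact ⟨b, Subtype.ext (Prod.ext hbx hbc)⟩
end

section
/- Let p be a prime number, k a perfect field of characteristic p, and 𝔖 := W(k)⟦u⟧ the power series ring over the ring W(k) of p-typical Witt vectors of k. Let φ : 𝔖 → 𝔖 be the ring homomorphism determined by applying the Witt-vector Frobenius F to each coefficient and substituting u ↦ u^p, i.e. φ(Σ_n a_n u^n) = Σ_n F(a_n) u^{pn}. Then 𝔖, regarded as a module over itself by restriction of scalars along φ, is free of rank p with basis 1, u, u^2, …, u^{p−1}; in particular, the ring homomorphism φ is faithfully flat. -/
/-- A ring homomorphism `f : R → S` is *faithfully flat* if it makes `S` a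
faithfully flat `R`-module (the `R`-module structure on `S` being restriction
of scalars along `f`). -/
def RingHomFaithfullyFlat {R S : Type*} [CommRing R] [CommRing S] (f : R →+* S) : Prop :=
  letI : Module R S := f.toModule
  Module.FaithfullyFlat R S

/-!
Write `Φ(a) := Σ_{i<n} φ(aᵢ)·Xⁱ` for `a : Fin n → R⟦X⟧`. Since `φ(aᵢ)` is supported in degrees
divisible by `n`, the coefficient of `Φ(a)` in degree `m` only involves `aᵢ` for `i = m % n`:
it is `σ(coeff (m / n) aᵢ)`. As `σ` is bijective, this can be solved uniquely for the `aᵢ`, so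
`Φ` is bijective. Read as a map of modules over `φ`, this makes `1, X, …, X^{n-1}` a basis, and a
nonzero finite free module is faithfully flat.
-/

open PowerSeries

theorem RingHom.faithfullyFlat_of_bijective_sum_map_mul {R S : Type*} [CommRing R] [CommRing S]
    [Nontrivial R] (f : R →+* S) {ι : Type*} [Fintype ι] [Nonempty ι] (b : ι → S)
    (hb : Function.Bijective fun a : ι → R => ∑ i, f (a i) * b i) :
    RingHomFaithfullyFlat f := by
  let : Module R S := f.toModule
  have := Module.Free.of_basis (Pi.basisFun R ι)
  exact Module.FaithfullyFlat.of_linearEquiv R (ι → R)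
    (LinearEquiv.ofBijective (Fintype.linearCombination R b) hb).symm

namespace PowerSeries

variable {R : Type*} [Semiring R]

noncomputable def untwistedSection (σ : R ≃ R) (n : ℕ) (f : R⟦X⟧) (i : Fin n) : R⟦X⟧ :=
  mk fun m => σ.symm (coeff (n * m + i) f)

variable {n : ℕ} [NeZero n] {φ : R⟦X⟧ →+* R⟦X⟧}

section

variable {σ : R → R}
  (hφ_coeff : ∀ f m, coeff (n * m) (φ f) = σ (coeff m f))
  (hφ_nondiv : ∀ f m, ¬ n ∣ m → coeff m (φ f) = 0)
include hφ_coeff hφ_nondiv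

theorem coeff_sum_map_mul_X_pow (a : Fin n → R⟦X⟧) (m : ℕ) :
    coeff m (∑ i : Fin n, φ (a i) * X ^ (i : ℕ)) = σ (coeff (m / n) (a (Fin.ofNat n m))) := by
  rw [map_sum, Finset.sum_eq_single (Fin.ofNat n m)]
  · rw [coeff_mul_X_pow', Fin.val_ofNat, if_pos (Nat.mod_le m n),
      ← Nat.mul_div_self_eq_mod_sub_self, hφ_coeff]
  · intro i _ hi
    rw [coeff_mul_X_pow']
    split_ifs with hle
    · refine hφ_nondiv _ _ fun hdvd => hi ?_
      rw [← Fin.val_inj, Fin.val_ofNat, ← Nat.sub_add_cancel hle, Nat.add_mod,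
        Nat.dvd_iff_mod_eq_zero.mp hdvd, zero_add, Nat.mod_mod, Nat.mod_eq_of_lt i.isLt]
    · rfl
  · exact fun h => absurd (Finset.mem_univ _) h

end

section

variable (σ : R ≃ R)
  (hφ_coeff : ∀ f m, coeff (n * m) (φ f) = σ (coeff m f))
  (hφ_nondiv : ∀ f m, ¬ n ∣ m → coeff m (φ f) = 0)
include hφ_coeff hφ_nondiv

theorem sum_map_untwistedSection_mul_X_pow (f : R⟦X⟧) :
    ∑ i : Fin n, φ (untwistedSection σ n f i) * X ^ (i : ℕ) = f := by
  ext m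
  rw [coeff_sum_map_mul_X_pow hφ_coeff hφ_nondiv, untwistedSection, coeff_mk, Fin.val_ofNat,
    Nat.div_add_mod, Equiv.apply_symm_apply]

theorem untwistedSection_sum_map_mul_X_pow (a : Fin n → R⟦X⟧) :
    untwistedSection σ n (∑ i : Fin n, φ (a i) * X ^ (i : ℕ)) = a := by
  funext i
  ext m
  have hdiv : (n * m + i) / n = m := by
    rw [Nat.mul_add_div (NeZero.pos n), Nat.div_eq_of_lt i.isLt, add_zero]
  have hmod : Fin.ofNat n (n * m + i) = i := by
    rw [← Fin.val_inj, Fin.val_ofNat, Nat.mul_add_mod, Nat.mod_eq_of_lt i.isLt]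
  rw [untwistedSection, coeff_mk, coeff_sum_map_mul_X_pow hφ_coeff hφ_nondiv, hdiv, hmod,
    Equiv.symm_apply_apply]

theorem bijective_sum_map_mul_X_pow :
    Function.Bijective fun a : Fin n → R⟦X⟧ => ∑ i : Fin n, φ (a i) * X ^ (i : ℕ) :=
  Function.bijective_iff_has_inverse.mpr ⟨untwistedSection σ n,
    untwistedSection_sum_map_mul_X_pow σ hφ_coeff hφ_nondiv,
    sum_map_untwistedSection_mul_X_pow σ hφ_coeff hφ_nondiv⟩

end

end PowerSeries

theorem wittVector_powerSeries_frobenius_finite_free_and_faithfullyFlat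
    (p : ℕ) [hp : Fact p.Prime] (k : Type*) [Field k] [CharP k p] [PerfectRing k p]
    (φ : PowerSeries (WittVector p k) →+* PowerSeries (WittVector p k))
    (hφ_coeff : ∀ (f : PowerSeries (WittVector p k)) (n : ℕ),
      PowerSeries.coeff (R := WittVector p k) (p * n) (φ f) =
        WittVector.frobenius (PowerSeries.coeff (R := WittVector p k) n f))
    (hφ_nondiv : ∀ (f : PowerSeries (WittVector p k)) (m : ℕ), ¬ p ∣ m →
      PowerSeries.coeff (R := WittVector p k) m (φ f) = 0) :
    (∀ f : PowerSeries (WittVector p k),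
      ∃! a : Fin p → PowerSeries (WittVector p k),
        f = ∑ i : Fin p, φ (a i) * PowerSeries.X ^ (i : ℕ)) ∧
    RingHomFaithfullyFlat φ := by
  have hbij := bijective_sum_map_mul_X_pow (WittVector.frobeniusEquiv p k).toEquiv
    hφ_coeff hφ_nondiv
  exact ⟨fun f => by simpa only [eq_comm] using hbij.existsUnique f,
    RingHom.faithfullyFlat_of_bijective_sum_map_mul φ _ hbij⟩
end

section
/- Let p be a prime number and let A be a commutative Noetherian ring that is p-torsion-free and classically p-adically complete, and let φ : A → A be a ring homomorphism with φ(a) ≡ a^p (mod pA) for all a ∈ A (a Frobenius lift). Suppose there exist elements x_1, …, x_d ∈ A such that A/pA, regarded as a module over itself by restriction of scalars along its Frobenius endomorphism x ↦ x^p, is free with basis the p^d monomials x̄_1^{a_1}⋯x̄_d^{a_d} with 0 ≤ a_i ≤ p−1. Then A, regarded as a module over itself by restriction of scalars along φ, is free with basis the monomials x_1^{a_1}⋯x_d^{a_d} (0 ≤ a_i ≤ p−1); in particular φ is faithfully flat. -/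
section AdicPi

variable {R M ι : Type*} [CommRing R] [AddCommGroup M] [Module R M] [Finite ι] {I : Ideal R}

theorem Submodule.mem_smul_top_pi_iff (x : ι → M) :
    x ∈ (I • ⊤ : Submodule R (ι → M)) ↔ ∀ i, x i ∈ (I • ⊤ : Submodule R M) := by
  classical
  have := Fintype.ofFinite ι
  refine ⟨fun hx i => ?_, fun hx => ?_⟩
  · have := Submodule.mem_map_of_mem (f := LinearMap.proj i) hx
    rw [Submodule.map_smul''] at this
    exact Submodule.smul_mono le_rfl le_top this
  · rw [← Finset.univ_sum_single x]
    refine Submodule.sum_mem _ fun i _ => ?_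
    have := Submodule.mem_map_of_mem (f := LinearMap.single R (fun _ => M) i) (hx i)
    rw [Submodule.map_smul''] at this
    exact Submodule.smul_mono le_rfl le_top this

instance IsHausdorff.pi [IsHausdorff I M] : IsHausdorff I (ι → M) :=
  ⟨fun x hx => _root_.funext fun i => IsHausdorff.haus ‹_› (x i) fun n =>
    SModEq.zero.2 <| (Submodule.mem_smul_top_pi_iff x).1 (SModEq.zero.1 (hx n)) i⟩

instance IsPrecomplete.pi [IsPrecomplete I M] : IsPrecomplete I (ι → M) := by
  refine ⟨fun f hf => ?_⟩
  choose L hL using fun i => IsPrecomplete.prec ‹_› (f := fun n => f n i) fun hmn => by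
    rw [SModEq.sub_mem]
    exact (Submodule.mem_smul_top_pi_iff _).1 (SModEq.sub_mem.1 (hf hmn)) i
  exact ⟨L, fun n => SModEq.sub_mem.2 <|
    (Submodule.mem_smul_top_pi_iff _).2 fun i => SModEq.sub_mem.1 (hL i n)⟩

end AdicPi

theorem Submodule.eq_bot_of_le_smul_of_isHausdorff {R M : Type*} [CommRing R] [AddCommGroup M]
    [Module R M] {I : Ideal R} [IsHausdorff I M] {N : Submodule R M} (h : N ≤ I • N) : N = ⊥ := by
  have hpow : ∀ n : ℕ, N ≤ I ^ n • N := by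
    intro n
    induction n with
    | zero => simp
    | succ n ih =>
      calc N ≤ I • N := h
        _ ≤ I • I ^ n • N := smul_mono_right _ ih
        _ = I ^ (n + 1) • N := by rw [← Submodule.mul_smul, pow_succ']
  rw [eq_bot_iff, ← IsHausdorff.iInf_pow_smul ‹IsHausdorff I M›]
  exact le_iInf fun n => (hpow n).trans (smul_mono_right _ le_top)

section BasisLift

variable {R S ι : Type*} [CommRing R] [CommRing S] [Fintype ι]

theorem bijective_sum_map_mul_of_bijective_mod (f : R →+* S) (v : ι → S) (p : R)
    [IsAdicComplete (Ideal.span {p}) R] [IsHausdorff (Ideal.span {f p}) S]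
    (hp : f p ∈ nonZeroDivisors S)
    (hsurj : ∀ y : S, ∃ c : ι → R, f p ∣ y - ∑ i, f (c i) * v i)
    (hinj : ∀ c : ι → R, ∑ i, f (c i) * v i = 0 → ∀ i, p ∣ c i) :
    Function.Bijective fun c : ι → R => ∑ i, f (c i) * v i := by
  let _ := f.toAlgebra
  have : IsHausdorff (Ideal.span {p}) S := by
    rwa [← IsHausdorff.map_algebraMap_iff (S := S), Ideal.map_span, Set.image_singleton]
  let L : (ι → R) →ₗ[R] S := Fintype.linearCombination R v
  change Function.Bijective L
  refine ⟨LinearMap.ker_eq_bot.1 <|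
    Submodule.eq_bot_of_le_smul_of_isHausdorff (I := Ideal.span {p}) fun c hc => ?_,
    surjective_of_mkQ_comp_surjective (I := Ideal.span {p}) fun y => ?_⟩
  · choose c' hc' using hinj c hc
    obtain rfl : c = p • c' := funext hc'
    have hc'L : L c' = 0 := by
      refine (mul_left_mem_nonZeroDivisors_eq_zero_iff hp).1 ?_
      rw [← hc, map_smul, Algebra.smul_def]
      rfl
    exact Submodule.smul_mem_smul (Ideal.mem_span_singleton_self p) hc'L
  · obtain ⟨y, rfl⟩ := Submodule.mkQ_surjective _ y
    obtain ⟨c, hc⟩ := hsurj y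
    refine ⟨c, ?_⟩
    rw [LinearMap.comp_apply, Submodule.mkQ_apply, Submodule.mkQ_apply, Submodule.Quotient.eq,
      Ideal.smul_top_eq_map, Submodule.restrictScalars_mem, Ideal.map_span, Set.image_singleton,
      Ideal.mem_span_singleton, dvd_sub_comm]
    exact hc

theorem ringHomFaithfullyFlat_of_bijective_sum_map_mul [Nonempty ι] (f : R →+* S) (v : ι → S)
    (h : Function.Bijective fun c : ι → R => ∑ i, f (c i) * v i) : RingHomFaithfullyFlat f := by
  let _ : Module R S := f.toModule
  let e : (ι → R) ≃ₗ[R] S := LinearEquiv.ofBijective (Fintype.linearCombination R v) h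
  exact Module.FaithfullyFlat.of_linearEquiv _ _
    (e.symm ≪≫ₗ (Finsupp.linearEquivFunOnFinite R R ι).symm)

end BasisLift

theorem frobenius_lift_finite_free_and_faithfullyFlat_of_finite_p_basis_general
    {A : Type*} [CommRing A] (p : ℕ) (hp : p.Prime)
    (hpA : (p : A) ∈ nonZeroDivisors A)
    (hcomp : IsAdicComplete (Ideal.span {(p : A)}) A)
    (φ : A →+* A) (hφ : ∀ a : A, φ a - a ^ p ∈ Ideal.span {(p : A)})
    (d : ℕ) (x : Fin d → A)
    (hbasis : ∀ y : A ⧸ Ideal.span {(p : A)},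
      ∃! c : (Fin d → Fin p) → A ⧸ Ideal.span {(p : A)},
        y = ∑ a : Fin d → Fin p,
          (c a) ^ p * ∏ i : Fin d,
            (Ideal.Quotient.mk (Ideal.span {(p : A)}) (x i)) ^ ((a i : ℕ))) :
    (∀ y : A, ∃! c : (Fin d → Fin p) → A,
      y = ∑ a : Fin d → Fin p, φ (c a) * ∏ i : Fin d, (x i) ^ ((a i : ℕ))) ∧
    RingHomFaithfullyFlat φ := by
  set π := Ideal.Quotient.mk (Ideal.span {(p : A)})
  have hφp : φ p = p := map_natCast φ p
  have := hcomp
  have : IsHausdorff (Ideal.span {φ p}) A := by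
    rw [hφp]; exact hcomp.toIsHausdorff
  have : Nonempty (Fin d → Fin p) := ⟨fun _ => ⟨0, hp.pos⟩⟩
  have hπφ (a : A) : π (φ a) = π a ^ p := by rw [← map_pow]; exact Ideal.Quotient.eq.2 (hφ a)
  have hπsum (c : (Fin d → Fin p) → A) : π (∑ a, φ (c a) * ∏ i, x i ^ (a i : ℕ)) =
      ∑ a, (π ∘ c) a ^ p * ∏ i, π (x i) ^ (a i : ℕ) := by
    simp only [map_sum, map_mul, map_prod, map_pow, hπφ, Function.comp_apply]
  have hdvd_iff (y : A) : (p : A) ∣ y ↔ π y = 0 := by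
    rw [Ideal.Quotient.eq_zero_iff_mem, Ideal.mem_span_singleton]
  have hbij : Function.Bijective fun c : (Fin d → Fin p) → A =>
      ∑ a, φ (c a) * ∏ i, x i ^ (a i : ℕ) := by
    refine bijective_sum_map_mul_of_bijective_mod φ _ (p : A) (by rwa [hφp]) (fun y => ?_)
      (fun c hc => ?_)
    · obtain ⟨cbar, hcbar, -⟩ := hbasis (π y)
      obtain ⟨c, rfl⟩ : ∃ c, π ∘ c = cbar := Ideal.Quotient.mk_surjective.comp_left cbar
      exact ⟨c, by rw [hφp, hdvd_iff, map_sub, hπsum, ← hcbar, sub_self]⟩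
    · have hc0 : π ∘ c = 0 := (hbasis 0).unique (by rw [← hπsum, hc, map_zero])
        (by simp [zero_pow hp.ne_zero])
      exact fun a => (hdvd_iff _).2 (congrFun hc0 a)
  exact ⟨fun y => by simpa only [eq_comm] using hbij.existsUnique y,
    ringHomFaithfullyFlat_of_bijective_sum_map_mul φ _ hbij⟩

theorem frobenius_lift_finite_free_and_faithfullyFlat_of_finite_p_basis
    {A : Type*} [CommRing A] [IsNoetherianRing A] (p : ℕ) (hp : p.Prime)
    (hpA : (p : A) ∈ nonZeroDivisors A)
    (hcomp : IsAdicComplete (Ideal.span {(p : A)}) A)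
    (φ : A →+* A) (hφ : ∀ a : A, φ a - a ^ p ∈ Ideal.span {(p : A)})
    (d : ℕ) (x : Fin d → A)
    (hbasis : ∀ y : A ⧸ Ideal.span {(p : A)},
      ∃! c : (Fin d → Fin p) → A ⧸ Ideal.span {(p : A)},
        y = ∑ a : Fin d → Fin p,
          (c a) ^ p * ∏ i : Fin d,
            (Ideal.Quotient.mk (Ideal.span {(p : A)}) (x i)) ^ ((a i : ℕ))) :
    (∀ y : A, ∃! c : (Fin d → Fin p) → A,
      y = ∑ a : Fin d → Fin p, φ (c a) * ∏ i : Fin d, (x i) ^ ((a i : ℕ))) ∧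
    RingHomFaithfullyFlat φ :=
  frobenius_lift_finite_free_and_faithfullyFlat_of_finite_p_basis_general p hp hpA hcomp φ hφ d x
    hbasis
end

section
/- Let A be a commutative ring and f, g ∈ A. Assume that A is classically f-adically complete (the canonical map A → lim_n A/f^n A is bijective), that g is a nonzerodivisorptr on A, and that f is a nonzerodivisor on the quotient A/gA (i.e. A/gA is f-torsion-free). Then A/gA is classically f-adically complete: the canonical map A/gA → lim_n (A/gA)/f^n (A/gA) is bijective. -/
/-!
Precompleteness passes to every quotient, since adic completion preserves surjections. For
separatedness, if `x ≡ g • cₙ` modulo `fⁿ M` for all `n`, then `g • (cₙ - cₙ₊₁) ∈ fⁿ M`.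
Regularity of `g` on `M` and of `f` on `M / g M` makes `g` regular on `M / fⁿ M`, so `(cₙ)`
is Cauchy, and its limit `L` satisfies `x = g • L` because `M` is separated.
-/

open Submodule Pointwise

section

variable {R M : Type*} [CommRing R] [AddCommGroup M] [Module R M]

theorem IsPrecomplete.of_surjective {N : Type*} [AddCommGroup N] [Module R N] {I : Ideal R}
    [IsPrecomplete I M] {φ : M →ₗ[R] N} (hφ : Function.Surjective φ) : IsPrecomplete I N :=
  AdicCompletion.of_surjective_iff.1 fun y => by
    obtain ⟨x, rfl⟩ := AdicCompletion.map_surjective I hφ y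
    obtain ⟨m, rfl⟩ := AdicCompletion.of_surjective I M x
    exact ⟨φ m, (AdicCompletion.map_of _ _ _).symm⟩

theorem Submodule.Quotient.mk_mem_smul_top_iff (N : Submodule R M) (J : Ideal R) (x : M) :
    (Quotient.mk x : M ⧸ N) ∈ (J • ⊤ : Submodule R (M ⧸ N)) ↔ x ∈ N ⊔ J • ⊤ := by
  rw [← comap_map_mkQ, map_smul'', map_top, range_mkQ]
  rfl

theorem IsSMulRegular.quotSMulTop_swap {f g : R} (hg : IsSMulRegular M g)
    (hf : IsSMulRegular (QuotSMulTop g M) f) : IsSMulRegular (QuotSMulTop f M) g := by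
  refine (isSMulRegular_quotient_iff_mem_of_smul_mem _ _).2 fun x hx => ?_
  obtain ⟨y, -, hy⟩ := (mem_smul_pointwise_iff_exists _ _ _).1 hx
  have hy_mem : y ∈ g • (⊤ : Submodule R M) :=
    mem_of_isSMulRegular_quotient_of_smul_mem hf (hy ▸ smul_mem_pointwise_smul x g ⊤ trivial)
  obtain ⟨z, -, rfl⟩ := (mem_smul_pointwise_iff_exists _ _ _).1 hy_mem
  have hx_eq : x = f • z := hg (show g • x = g • f • z by rw [← hy, smul_comm])
  exact hx_eq ▸ smul_mem_pointwise_smul z f ⊤ trivial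

theorem isHausdorff_quotSMulTop {I : Ideal R} [IsHausdorff I M] [IsPrecomplete I M] {g : R}
    (hg : ∀ n, IsSMulRegular (M ⧸ (I ^ n • ⊤ : Submodule R M)) g) :
    IsHausdorff I (QuotSMulTop g M) := by
  refine ⟨fun y hy => ?_⟩
  obtain ⟨x, rfl⟩ := mkQ_surjective _ y
  have hc : ∀ n, ∃ c : M, x - g • c ∈ (I ^ n • ⊤ : Submodule R M) := fun n => by
    obtain ⟨_, hgc, b, hb, rfl⟩ :=
      mem_sup.1 ((Quotient.mk_mem_smul_top_iff _ _ x).1 (SModEq.zero.1 (hy n)))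
    obtain ⟨c, -, rfl⟩ := (mem_smul_pointwise_iff_exists _ _ _).1 hgc
    exact ⟨c, by simpa using hb⟩
  choose c hc using hc
  have hcauchy : AdicCompletion.IsAdicCauchy I M c :=
    (AdicCompletion.isAdicCauchy_iff I M c).2 fun n => by
      refine SModEq.sub_mem.2 (mem_of_isSMulRegular_quotient_of_smul_mem (hg n) ?_)
      have hle : (I ^ (n + 1) • ⊤ : Submodule R M) ≤ I ^ n • ⊤ :=
        smul_mono_left (Ideal.pow_le_pow_right n.le_succ)
      simpa [smul_sub] using sub_mem (hle (hc (n + 1))) (hc n)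
  obtain ⟨L, hL⟩ := IsPrecomplete.prec inferInstance hcauchy
  have hx_eq : x = g • L := sub_eq_zero.1 <|
    IsHausdorff.haus (I := I) inferInstance (x - g • L) fun n => SModEq.zero.2 <| by
      simpa [smul_sub] using add_mem (hc n) (Submodule.smul_mem _ g (SModEq.sub_mem.1 (hL n)))
  exact (Quotient.mk_eq_zero _).2 (hx_eq ▸ smul_mem_pointwise_smul L g ⊤ trivial)

theorem isAdicComplete_quotSMulTop {f g : R} [IsAdicComplete (Ideal.span {f}) M]
    (hg : IsSMulRegular M g) (hf : IsSMulRegular (QuotSMulTop g M) f) :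
    IsAdicComplete (Ideal.span {f}) (QuotSMulTop g M) where
  toIsHausdorff := isHausdorff_quotSMulTop fun n => by
    rw [Ideal.span_singleton_pow, ideal_span_singleton_smul]
    exact hg.quotSMulTop_swap (hf.pow n)
  toIsPrecomplete := .of_surjective (mkQ_surjective _)

end

theorem quotient_isAdicComplete_of_isAdicComplete
    {A : Type*} [CommRing A] (f g : A)
    (hcomp : IsAdicComplete (Ideal.span {f}) A)
    (hg : g ∈ nonZeroDivisors A)
    (hf : ∀ x : A, f * x ∈ Ideal.span {g} → x ∈ Ideal.span {g}) :
    IsAdicComplete (Ideal.span {f}) (A ⧸ Ideal.span {g}) := by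
  have hspan : g • (⊤ : Submodule A A) = Ideal.span {g} := by
    rw [← ideal_span_singleton_smul, smul_eq_mul, Ideal.mul_top]
  have hf' : IsSMulRegular (A ⧸ g • (⊤ : Submodule A A)) f := by
    rw [hspan]
    exact (isSMulRegular_quotient_iff_mem_of_smul_mem _ _).2 hf
  rw [← hspan]
  exact isAdicComplete_quotSMulTop
    (isRegular_iff_mem_nonZeroDivisors.2 hg).left.isSMulRegular hf'
end

section
/- Let A be a commutative ring, M a flat A-module, N an A-module, and N_1, N_2 two A-submodules of N. For any submodule N' ⊆ N the induced map M ⊗_A N' → M ⊗_A N is injective, so M ⊗_A N' may be identified with its image in M ⊗_A N. With this identification, M ⊗_A (N_1 ∩ N_2) = (M ⊗_A N_1) ∩ (M ⊗_A N_2) as submodules of M ⊗_A N. -/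
/-!
Let A be a commutative ring, M a flat A-module, N an A-module, and N₁, N₂ two
A-submodules of N.  For any submodule N' ⊆ N the induced map M ⊗ N' → M ⊗ N is
injective, and, identifying M ⊗ N' with its image in M ⊗ N, one has
M ⊗ (N₁ ∩ N₂) = (M ⊗ N₁) ∩ (M ⊗ N₂) inside M ⊗ N.
-/

theorem flat_tensor_intersection_of_two_submodules
    {A M N : Type*} [CommRing A]
    [AddCommGroup M] [Module A M] [AddCommGroup N] [Module A N]
    [Module.Flat A M] (N₁ N₂ : Submodule A N) :
    (∀ N' : Submodule A N,
      Function.Injective (LinearMap.lTensor M N'.subtype)) ∧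
    LinearMap.range (LinearMap.lTensor M (N₁ ⊓ N₂).subtype) =
      LinearMap.range (LinearMap.lTensor M N₁.subtype) ⊓
        LinearMap.range (LinearMap.lTensor M N₂.subtype) := by
  constructor
  · intro N'
    exact Module.Flat.lTensor_preserves_injective_linearMap N'.subtype
      N'.injective_subtype
  · apply le_antisymm
    · refine le_inf ?_ ?_
      · rintro x ⟨y, rfl⟩
        refine ⟨LinearMap.lTensor M (Submodule.inclusion inf_le_left) y, ?_⟩
        rw [← LinearMap.comp_apply, ← LinearMap.lTensor_comp]
        rfl
      · rintro x ⟨y, rfl⟩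
        refine ⟨LinearMap.lTensor M (Submodule.inclusion inf_le_right) y, ?_⟩
        rw [← LinearMap.comp_apply, ← LinearMap.lTensor_comp]
        rfl
    · rintro x ⟨⟨y, rfl⟩, ⟨z, hz⟩⟩
      -- exactness of  (N₁⊓N₂) → N₁ → N/N₂
      have hexact : Function.Exact (Submodule.inclusion (inf_le_left :
          N₁ ⊓ N₂ ≤ N₁)) (N₂.mkQ ∘ₗ N₁.subtype) := by
        intro a
        constructor
        · intro ha
          have : (a : N) ∈ N₂ := by
            simpa [Submodule.Quotient.mk_eq_zero] using ha
          exact ⟨⟨a, a.2, this⟩, rfl⟩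
        · rintro ⟨b, rfl⟩
          simpa [Submodule.Quotient.mk_eq_zero] using b.2.2
      have htens := Module.Flat.lTensor_exact M hexact
      have hexact2 := Module.Flat.lTensor_exact M (LinearMap.exact_subtype_mkQ N₂)
      have hy0 : LinearMap.lTensor M (N₂.mkQ ∘ₗ N₁.subtype) y = 0 := by
        have : LinearMap.lTensor M N₂.mkQ (LinearMap.lTensor M N₁.subtype y) = 0 := by
          rw [← hz]
          exact (hexact2 _).mpr ⟨z, rfl⟩
        rw [LinearMap.lTensor_comp, LinearMap.comp_apply]
        exact this
      obtain ⟨w, hw⟩ := (htens y).mp hy0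
      refine ⟨w, ?_⟩
      have : N₁.subtype ∘ₗ Submodule.inclusion (inf_le_left :
          N₁ ⊓ N₂ ≤ N₁) = (N₁ ⊓ N₂).subtype := rfl
      rw [← this, LinearMap.lTensor_comp, LinearMap.comp_apply, hw]
end

section
/- Let f : A → B be a homomorphism of commutative rings and E ∈ A. Assume that E is a nonzerodivisor on A, that f(E) is a nonzerodivisor on B, and that the induced map A/EA → B/f(E)B is injective. Then the commutative square of ring homomorphisms A → A[1/E], A → B, A[1/E] → B[1/E], B → B[1/E] is Cartesian: the induced ring homomorphism A → A[1/E] ×_{B[1/E]} B is bijective. Equivalently, A = A[1/E] ∩ B inside B[1/E]: any x ∈ A[1/E] whose image in B[1/E] lies in the image of B comes from a (unique) element of A. -/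
/-!
Let f : A → B be a homomorphism of commutative rings and E ∈ A.  Assume E is a
nonzerodivisor on A, f(E) is a nonzerodivisor on B, and the induced map
A/EA → B/f(E)B is injective (expressed elementwise).  Then the square
A → A[1/E], A → B, A[1/E] → B[1/E], B → B[1/E] is Cartesian: the induced map
A → A[1/E] ×_{B[1/E]} B is bijective; equivalently A = A[1/E] ∩ B inside
B[1/E].  Here g is the (unique) ring homomorphism A[1/E] → B[1/E] compatible
with f and the localization maps.
-/

private lemma descend_aux {A B : Type*} [CommRing A] [CommRing B] (f : A →+* B) (E : A)
    (hEB : f E ∈ nonZeroDivisors B)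
    (hinj : ∀ a : A, f a ∈ Ideal.span {f E} → a ∈ Ideal.span {E}) :
    ∀ (n : ℕ) (a : A) (b : B), f a = f E ^ n * b → ∃ a' : A, a = E ^ n * a' ∧ f a' = b := by
  intro n
  induction n with
  | zero => intro a b h; exact ⟨a, by simp, by simpa using h⟩
  | succ n ih =>
    intro a b h
    have hmem : f a ∈ Ideal.span {f E} := by
      rw [Ideal.mem_span_singleton]
      exact ⟨f E ^ n * b, by rw [h]; ring⟩
    obtain ⟨a₁, ha₁⟩ := Ideal.mem_span_singleton.mp (hinj a hmem)
    have h1 : f E * f a₁ = f E * (f E ^ n * b) := by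
      have := h
      rw [ha₁, map_mul] at this
      rw [this]; ring
    have h2 : f a₁ = f E ^ n * b := (mul_cancel_left_mem_nonZeroDivisors hEB).mp h1
    obtain ⟨a', ha', hfa'⟩ := ih a₁ b h2
    exact ⟨a', by rw [ha₁, ha']; ring, hfa'⟩

theorem intersection_localization_descent
    {A B : Type*} [CommRing A] [CommRing B] (f : A →+* B) (E : A)
    (hEA : E ∈ nonZeroDivisors A) (hEB : f E ∈ nonZeroDivisors B)
    (hinj : ∀ a : A, f a ∈ Ideal.span {f E} → a ∈ Ideal.span {E})
    (g : Localization.Away E →+* Localization.Away (f E))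
    (hg : g.comp (algebraMap A (Localization.Away E)) =
      (algebraMap B (Localization.Away (f E))).comp f) :
    Function.Bijective (fun a : A =>
      (⟨(algebraMap A (Localization.Away E) a, f a),
        by exact RingHom.congr_fun hg a⟩ :
        {xb : Localization.Away E × B //
          g xb.1 = algebraMap B (Localization.Away (f E)) xb.2})) := by
  have hApow : Submonoid.powers E ≤ nonZeroDivisors A := Submonoid.powers_le.mpr hEA
  have hBpow : Submonoid.powers (f E) ≤ nonZeroDivisors B := Submonoid.powers_le.mpr hEB
  have hAinj : Function.Injective (algebraMap A (Localization.Away E)) :=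
    IsLocalization.injective _ hApow
  have hBinj : Function.Injective (algebraMap B (Localization.Away (f E))) :=
    IsLocalization.injective _ hBpow
  constructor
  · intro a a' h
    apply hAinj
    exact congrArg (fun p => p.1.1) h
  · rintro ⟨⟨x, b⟩, hxb⟩
    obtain ⟨⟨a, s⟩, hs⟩ := IsLocalization.surj (Submonoid.powers E) x
    obtain ⟨n, hn⟩ := s.2
    simp only at hxb
    -- apply g to hs
    have hgs : g x * algebraMap B (Localization.Away (f E)) (f s.1) =
        algebraMap B (Localization.Away (f E)) (f a) := by
      have := congrArg g hs
      rw [map_mul] at this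
      rw [show (g (algebraMap A (Localization.Away E) s.1)) =
        algebraMap B (Localization.Away (f E)) (f s.1) from RingHom.congr_fun hg s.1,
        show (g (algebraMap A (Localization.Away E) a)) =
        algebraMap B (Localization.Away (f E)) (f a) from RingHom.congr_fun hg a] at this
      exact this
    rw [hxb, ← map_mul] at hgs
    have hfa : f a = f E ^ n * b := by
      have := hBinj hgs
      rw [← this, ← hn, map_pow]; ring
    obtain ⟨a', ha', hfa'⟩ := descend_aux f E hEB hinj n a b hfa
    refine ⟨a', ?_⟩
    have hx : algebraMap A (Localization.Away E) a' = x := by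
      have hu : IsUnit (algebraMap A (Localization.Away E) s.1) :=
        IsLocalization.map_units (Localization.Away E) s
      apply hu.mul_left_cancel
      rw [mul_comm _ x, hs, ← map_mul, ← hn, ha', mul_comm]
    exact Subtype.ext (Prod.ext hx hfa')
end

section
/- Let A be a commutative ring, p a prime number and d ∈ A. Assume that p and d are nonzerodivisors on A, that A/dA is p-torsion-free, and that A is classically p-adically complete. Then the canonical ring homomorphism A → (A[1/d])^∧_p from A to the p-adic completion of A[1/d] is injective, and the reduction map A[1/d]/p·A[1/d] → (A[1/d])^∧_p / p·(A[1/d])^∧_p is an isomorphism. -/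
section Regularity

variable {A : Type*} [CommRing A] {x d : A}

theorem pow_dvd_of_pow_dvd_mul_s14 (hd : d ∈ nonZeroDivisors A)
    (hx : ∀ y : A, x * y ∈ Ideal.span {d} → y ∈ Ideal.span {d}) (n : ℕ) {y : A}
    (h : x ^ n ∣ d * y) : x ^ n ∣ y := by
  induction n generalizing y with
  | zero => exact pow_zero x ▸ one_dvd y
  | succ n ih =>
    obtain ⟨z, hz⟩ := h
    obtain ⟨w, hw⟩ := Ideal.mem_span_singleton'.1 <|
      hx (x ^ n * z) (Ideal.mem_span_singleton'.2 ⟨y, by rw [mul_comm y, hz]; ring⟩)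
    have hy : y = x * w := (mul_cancel_left_mem_nonZeroDivisors hd).1 <| by
      rw [hz, pow_succ', mul_assoc, ← hw]; ring
    rw [hy, pow_succ']
    exact mul_dvd_mul_left x (ih ⟨z, by rw [mul_comm, hw]⟩)

theorem pow_dvd_of_pow_dvd_pow_mul_s14 (hd : d ∈ nonZeroDivisors A)
    (hx : ∀ y : A, x * y ∈ Ideal.span {d} → y ∈ Ideal.span {d}) (k n : ℕ) {y : A}
    (h : x ^ n ∣ d ^ k * y) : x ^ n ∣ y := by
  induction k generalizing y with
  | zero => simpa using h
  | succ k ih => exact pow_dvd_of_pow_dvd_mul_s14 hd hx n (ih (by rwa [pow_succ, mul_assoc] at h))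

end Regularity

theorem IsLocalization.dvd_of_algebraMap_dvd {R S : Type*} [CommRing R] [CommRing S]
    [Algebra R S] {M : Submonoid R} [IsLocalization M S] {x a : R}
    (hM : ∀ m ∈ M, ∀ y : R, x ∣ m * y → x ∣ y) (h : algebraMap R S x ∣ algebraMap R S a) :
    x ∣ a := by
  obtain ⟨b, hb⟩ := h
  obtain ⟨⟨c, m⟩, hc⟩ := IsLocalization.surj M b
  obtain ⟨t, ht⟩ := (IsLocalization.eq_iff_exists M S).1 <|
    show algebraMap R S (m * a) = algebraMap R S (x * c) by
      rw [map_mul, map_mul, hb, ← hc]; ring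
  refine hM (t * m) (mul_mem t.2 m.2) a ⟨t * c, ?_⟩
  calc (t * m : R) * a = t * (m * a) := by ring
    _ = t * (x * c) := ht
    _ = x * (t * c) := by ring

theorem Ideal.mem_span_singleton_pow_smul_top {R : Type*} [CommRing R] {x y : R} {n : ℕ} :
    y ∈ (Ideal.span {x} ^ n • ⊤ : Submodule R R) ↔ x ^ n ∣ y := by
  rw [smul_eq_mul, Ideal.mul_top, Ideal.span_singleton_pow, Ideal.mem_span_singleton]

theorem IsHausdorff.eq_zero_of_forall_pow_dvd {R : Type*} [CommRing R] {x a : R}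
    (h : IsHausdorff (Ideal.span {x}) R) (ha : ∀ n, x ^ n ∣ a) : a = 0 :=
  h.haus a fun n => SModEq.zero.2 (Ideal.mem_span_singleton_pow_smul_top.2 (ha n))

namespace AdicCompletion

variable {R : Type*} [CommRing R]

theorem pow_dvd_of_algebraMap_eq_zero {x b : R}
    (hb : algebraMap R (AdicCompletion (Ideal.span {x}) R) b = 0) (n : ℕ) : x ^ n ∣ b := by
  rw [← Ideal.mem_span_singleton_pow_smul_top, ← Submodule.Quotient.mk_eq_zero,
    ← Submodule.mkQ_apply, ← of_apply]
  exact congrArg (fun y => y.val n) hb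

theorem bijective_quotientMap_algebraMap {I : Ideal R} (hI : I.FG)
    {J : Ideal (AdicCompletion I R)} (hJ : I.map (algebraMap R (AdicCompletion I R)) = J)
    (h : I ≤ J.comap (algebraMap R (AdicCompletion I R))) :
    Function.Bijective (Ideal.quotientMap J (algebraMap R (AdicCompletion I R)) h) := by
  have hker : ∀ y, y ∈ J ↔ evalOneₐ I y = 0 := fun y => by
    rw [← hJ, ← ker_evalOneₐ_eq_map I hI]; rfl
  refine ⟨Ideal.quotientMap_injective' fun r hr => ?_, fun y => ?_⟩
  · rw [← Ideal.Quotient.eq_zero_iff_mem]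
    exact (hker _).1 hr
  · obtain ⟨y, rfl⟩ := Ideal.Quotient.mk_surjective y
    obtain ⟨r, hr⟩ := Ideal.Quotient.mk_surjective (evalOneₐ I y)
    refine ⟨Ideal.Quotient.mk I r, ?_⟩
    rw [Ideal.quotientMap_mk, Ideal.Quotient.eq, hker, map_sub, ← hr]
    exact sub_eq_zero.2 rfl

end AdicCompletion

theorem injective_to_completed_localization_and_bijective_mod_p
    {A : Type*} [CommRing A] (p : ℕ) (d : A)
    (hdA : d ∈ nonZeroDivisors A)
    (htf : ∀ x : A, (p : A) * x ∈ Ideal.span {d} → x ∈ Ideal.span {d})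
    (hcomp : IsAdicComplete (Ideal.span {(p : A)}) A) :
    Function.Injective (fun a : A =>
      algebraMap (Localization.Away d) (PAdicCompletionOfAway A p d)
        (algebraMap A (Localization.Away d) a)) ∧
    Function.Bijective (Ideal.quotientMap
      (Ideal.span {(p : PAdicCompletionOfAway A p d)})
      (algebraMap (Localization.Away d) (PAdicCompletionOfAway A p d))
      (show Ideal.span {(p : Localization.Away d)} ≤
          (Ideal.span {(p : PAdicCompletionOfAway A p d)}).comap
            (algebraMap (Localization.Away d) (PAdicCompletionOfAway A p d)) by
        rw [Ideal.span_le, Set.singleton_subset_iff, SetLike.mem_coe, Ideal.mem_comap,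
          map_natCast]
        exact Ideal.mem_span_singleton_self _)) := by
  refine ⟨(injective_iff_map_eq_zero ((algebraMap _ (PAdicCompletionOfAway A p d)).comp
    (algebraMap A (Localization.Away d)))).2 fun a ha => ?_, ?_⟩
  · refine hcomp.toIsHausdorff.eq_zero_of_forall_pow_dvd fun n => ?_
    have hpow : (p : Localization.Away d) ^ n ∣ algebraMap A _ a :=
      AdicCompletion.pow_dvd_of_algebraMap_eq_zero ha n
    refine IsLocalization.dvd_of_algebraMap_dvd (M := Submonoid.powers d)
      (S := Localization.Away d) ?_ (by rwa [map_pow, map_natCast])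
    rintro _ ⟨k, rfl⟩ y
    exact pow_dvd_of_pow_dvd_pow_mul_s14 hdA htf k n
  · refine AdicCompletion.bijective_quotientMap_algebraMap
      (Submodule.fg_span_singleton _) ?_ _
    rw [Ideal.map_span, Set.image_singleton, map_natCast]
end
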